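/- arXiv:math/0511122 — 3 statements merged into one kernel-verified Lean document; each statement's English description precedes it below -/
import Mathlib

section
/- Let g be a holomorphic automorphism of ℂ^N, let K ⊂ ℂ^N be compact, and let K' ⊂ ℂ^N be a compact set with K contained in the interior of K'. Then for every ε > 0 there exists δ > 0 such that every holomorphic automorphism φ of ℂ^N satisfying sup_{z∈K'} |φ(z) − g(z)| < δ also satisfies sup_{w∈g(K)} |φ⁻¹(w) − g⁻¹(w)| < ε. -/
open Metric Set

/-- A holomorphic automorphism of ℂ^N: a bijection that is holomorphic with
holomorphic inverse. -/
def IsAutomorphism {N : ℕ} (Φ : (Fin N → ℂ) → (Fin N → ℂ)) : Prop :=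
  Differentiable ℂ Φ ∧ ∃ Ψ : (Fin N → ℂ) → (Fin N → ℂ),
    Differentiable ℂ Ψ ∧ (∀ z, Ψ (Φ z) = z) ∧ (∀ w, Φ (Ψ w) = w)

/-- A discrete sequence without repetitions in ℂ^N. -/
def DiscreteSeq {N : ℕ} (a : ℕ → (Fin N → ℂ)) : Prop :=
  Function.Injective a ∧
  ∀ K : Set (Fin N → ℂ), IsCompact K → {j : ℕ | a j ∈ K}.Finite

/-- A sequence in ℂ^N is tame if some holomorphic automorphism sends `a j`
to `e j = (j, 0, …, 0)` for every `j`. -/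
def Tame {N : ℕ} (a : ℕ → (Fin N → ℂ)) : Prop :=
  ∃ Φ : (Fin N → ℂ) → (Fin N → ℂ), IsAutomorphism Φ ∧
    ∀ j : ℕ, Φ (a j) = fun i : Fin N => if (i : ℕ) = 0 then (j : ℂ) else 0

/-- A closed complex subvariety of ℂ^N: locally the common zero set of a family
of holomorphic functions. -/
def IsClosedSubvariety {N : ℕ} (X : Set (Fin N → ℂ)) : Prop :=
  IsClosed X ∧ ∀ p : Fin N → ℂ, ∃ U : Set (Fin N → ℂ), IsOpen U ∧ p ∈ U ∧
    ∃ F : Set ((Fin N → ℂ) → ℂ), (∀ f ∈ F, DifferentiableOn ℂ f U) ∧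
      X ∩ U = {z ∈ U | ∀ f ∈ F, f z = 0}

/-- Polynomial convexity: `K` equals its polynomial hull. -/
def PolyConvex {N : ℕ} (K : Set (Fin N → ℂ)) : Prop :=
  K = {z : Fin N → ℂ | ∀ p : MvPolynomial (Fin N) ℂ,
    ‖MvPolynomial.eval z p‖ ≤ ⨆ w ∈ K, ‖MvPolynomial.eval w p‖}

/-- `Φ` is a biholomorphic map from the open set `Ω` onto all of ℂ^N. -/
def BiholoOnto {N : ℕ} (Ω : Set (Fin N → ℂ)) (Φ : (Fin N → ℂ) → (Fin N → ℂ)) : Prop :=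
  DifferentiableOn ℂ Φ Ω ∧ ∃ Ψ : (Fin N → ℂ) → (Fin N → ℂ),
    Differentiable ℂ Ψ ∧ (∀ z ∈ Ω, Ψ (Φ z) = z) ∧ (∀ w, Ψ w ∈ Ω ∧ Φ (Ψ w) = w)

/-!
Choose `r > 0` with `closedBall z r ⊆ K'` for all `z ∈ K`, and `c > 0` with
`c ≤ dist (g x) (g z)` whenever `z ∈ K` and `dist x z = r` (compactness and injectivity).
If `φ` is `c / 2`-close to `g` on `K'`, then `φ⁻¹` maps the ball `B(g z, c / 2)` off the
sphere `S(z, r)`. The ball is connected and contains `φ z`, which `φ⁻¹` sends to the centre `z`,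
so `φ⁻¹` maps the whole ball into `B(z, r)`; in particular `dist (φ⁻¹ (g z)) z < r`.
-/

theorem IsPreconnected.dist_lt_of_dist_ne {X Y : Type*} [TopologicalSpace X]
    [PseudoMetricSpace Y] {U : Set X} (hU : IsPreconnected U) {ψ : X → Y} (hψ : Continuous ψ)
    {z : Y} {r : ℝ} (hsphere : ∀ y ∈ U, dist (ψ y) z ≠ r)
    {y₀ : X} (hy₀U : y₀ ∈ U) (hy₀ : dist (ψ y₀) z < r) :
    ∀ y ∈ U, dist (ψ y) z < r := by
  have hcover : U ⊆ ψ ⁻¹' ball z r ∪ ψ ⁻¹' (closedBall z r)ᶜ := fun y hy =>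
    (lt_or_gt_of_ne (hsphere y hy)).imp id fun h => (not_le.2 h : ¬dist (ψ y) z ≤ r)
  have hdisj : Disjoint (ψ ⁻¹' ball z r) (ψ ⁻¹' (closedBall z r)ᶜ) :=
    (disjoint_compl_right_iff_subset.2 ball_subset_closedBall).preimage ψ
  exact hU.subset_left_of_subset_union (isOpen_ball.preimage hψ)
    (isClosed_closedBall.isOpen_compl.preimage hψ) hdisj hcover ⟨y₀, hy₀U, hy₀⟩

theorem exists_pos_le_dist_of_dist_eq {X Y : Type*} [MetricSpace X] [ProperSpace X]
    [MetricSpace Y] {g : X → Y} (hg : Continuous g) (hinj : Function.Injective g)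
    {K : Set X} (hK : IsCompact K) {r : ℝ} (hr : r ≠ 0) :
    ∃ c > 0, ∀ z ∈ K, ∀ x, dist x z = r → c ≤ dist (g x) (g z) := by
  set S : Set (X × X) := {p | p.1 ∈ K ∧ dist p.2 p.1 = r}
  have hS : IsCompact S := by
    refine (hK.prod (hK.cthickening (r := r))).of_isClosed_subset ?_ ?_
    · exact (hK.isClosed.preimage continuous_fst).inter
        (isClosed_eq (continuous_snd.dist continuous_fst) continuous_const)
    · rintro ⟨z, x⟩ ⟨hz, hx⟩
      exact ⟨hz, mem_cthickening_of_dist_le x z r K hz hx.le⟩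
  have hpos : ∀ p ∈ S, 0 < dist (g p.2) (g p.1) := by
    rintro ⟨z, x⟩ ⟨-, hx⟩
    refine dist_pos.2 fun h => hr ?_
    rw [← hx, hinj h, dist_self]
  obtain ⟨c, hc, hcS⟩ := hS.exists_forall_le'
    ((hg.comp continuous_snd).dist (hg.comp continuous_fst)).continuousOn hpos
  exact ⟨c, hc, fun z hz x hx => hcS (z, x) ⟨hz, hx⟩⟩

theorem exists_pos_forall_dist_rightInverse_apply_lt {X F : Type*} [MetricSpace X]
    [ProperSpace X] [NormedAddCommGroup F] [NormedSpace ℝ F] {g : X → F} (hg : Continuous g)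
    (hinj : Function.Injective g) {K K' : Set X} (hK : IsCompact K) (hKK' : K ⊆ interior K')
    {ε : ℝ} (hε : 0 < ε) :
    ∃ δ > 0, ∀ (φ : X → F) (ψ : F → X), Continuous ψ → (∀ z, ψ (φ z) = z) →
      (∀ w, φ (ψ w) = w) → (∀ z ∈ K', dist (φ z) (g z) < δ) →
      ∀ z ∈ K, dist (ψ (g z)) z < ε := by
  obtain ⟨r₀, hr₀, hr₀K'⟩ := hK.exists_cthickening_subset_open isOpen_interior hKK'
  set r := min r₀ ε
  have hr : 0 < r := lt_min hr₀ hε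
  have hball : ∀ z ∈ K, closedBall z r ⊆ K' := fun z hz =>
    ((closedBall_subset_closedBall (min_le_left _ _)).trans
      (closedBall_subset_cthickening hz r₀)).trans (hr₀K'.trans interior_subset)
  obtain ⟨c, hc, hcg⟩ := exists_pos_le_dist_of_dist_eq hg hinj hK hr.ne'
  refine ⟨c / 2, half_pos hc, fun φ ψ hψ hψφ hφψ hφg z hz => ?_⟩
  have hsphere : ∀ y ∈ ball (g z) (c / 2), dist (ψ y) z ≠ r := by
    intro y hy hψy
    have hφ : dist y (g (ψ y)) < c / 2 := by
      simpa only [hφψ] using hφg (ψ y) (hball z hz (mem_closedBall.2 hψy.le))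
    have := hcg z hz (ψ y) hψy
    linarith [dist_triangle (g (ψ y)) y (g z), dist_comm y (g (ψ y)), mem_ball.1 hy]
  have hφz : φ z ∈ ball (g z) (c / 2) := hφg z (hball z hz (mem_closedBall_self hr.le))
  have hlt := (convex_ball (g z) (c / 2)).isPreconnected.dist_lt_of_dist_ne hψ hsphere hφz
    (by rwa [hψφ, dist_self]) (g z) (mem_ball_self (half_pos hc))
  exact hlt.trans_le (min_le_right _ _)

theorem stmt_6_general {N : ℕ}
    (g ginv : (Fin N → ℂ) → (Fin N → ℂ))
    (hg : Differentiable ℂ g)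
    (hgl : ∀ z, ginv (g z) = z)
    (K K' : Set (Fin N → ℂ)) (hK : IsCompact K)
    (hKK' : K ⊆ interior K')
    (ε : ℝ) (hε : 0 < ε) :
    ∃ δ : ℝ, 0 < δ ∧
      ∀ φ φinv : (Fin N → ℂ) → (Fin N → ℂ),
        Differentiable ℂ φ → Differentiable ℂ φinv →
        (∀ z, φinv (φ z) = z) → (∀ w, φ (φinv w) = w) →
        (∀ z ∈ K', ‖φ z - g z‖ < δ) →
        ∀ w ∈ g '' K, ‖φinv w - ginv w‖ < ε := by
  obtain ⟨δ, hδ, hclose⟩ := exists_pos_forall_dist_rightInverse_apply_lt hg.continuous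
    (Function.LeftInverse.injective hgl) hK hKK' hε
  refine ⟨δ, hδ, fun φ φinv _ hφinv hl hr hφg => ?_⟩
  rintro _ ⟨z, hz, rfl⟩
  rw [hgl, ← dist_eq_norm]
  refine hclose φ φinv hφinv.continuous hl hr (fun x hx => ?_) z hz
  simpa only [dist_eq_norm] using hφg x hx

/-- Approximation of an automorphism on a slightly larger compact set forces
approximation of the inverse on the image of the smaller set. -/
theorem stmt_6 {N : ℕ}
    (g ginv : (Fin N → ℂ) → (Fin N → ℂ))
    (hg : Differentiable ℂ g) (hginv : Differentiable ℂ ginv)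
    (hgl : ∀ z, ginv (g z) = z) (hgr : ∀ w, g (ginv w) = w)
    (K K' : Set (Fin N → ℂ)) (hK : IsCompact K) (hK' : IsCompact K')
    (hKK' : K ⊆ interior K')
    (ε : ℝ) (hε : 0 < ε) :
    ∃ δ : ℝ, 0 < δ ∧
      ∀ φ φinv : (Fin N → ℂ) → (Fin N → ℂ),
        Differentiable ℂ φ → Differentiable ℂ φinv →
        (∀ z, φinv (φ z) = z) → (∀ w, φ (φinv w) = w) →
        (∀ z ∈ K', ‖φ z - g z‖ < δ) →
        ∀ w ∈ g '' K, ‖φinv w - ginv w‖ < ε :=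
  stmt_6_general g ginv hg hgl K K' hK hKK' ε hε
end

section
/- Let (Φ_k)_{k∈ℕ} be a sequence of holomorphic automorphisms of ℂ^N and let (r_k)_{k∈ℕ} be radii with r_{k+1} ≥ r_k + 1 for all k (so r_k → ∞). Let B_k denote the open ball of radius r_k centered at 0, and assume that for every k, |Φ_{k+1}(z) − Φ_k(z)| < 2^{−k} for all z ∈ Φ_k⁻¹(B_k). Then the set Ω := ⋃_{k∈ℕ} Φ_k⁻¹(B_k) is open, the sequence (Φ_k) converges uniformly on every compact subset of Ω to a holomorphic map Φ, and Φ is a biholomorphic map of Ω onto all of ℂ^N. Moreover, Ω is exactly the set of points z ∈ ℂ^N for which the sequence (Φ_k(z))_{k∈ℕ} is bounded. -/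
open Metric Set

/-!
On `Φ k ⁻¹' ball 0 (r k)` the orbit `Φ m z` stays in `ball 0 (r m)` and moves by less than
`2⁻¹ ^ m` at step `m`, so `Φ m` converges uniformly there. A locally uniform limit of holomorphic
maps is holomorphic, since Cauchy estimates on complex lines make the derivatives converge too.

For the inverses `Ψ m = (Φ m)⁻¹`, a connectedness argument shows that
`‖Φ (m + 1) z‖ < r m - 2⁻¹ ^ m` forces `‖Φ m z‖ < r m`. Iterating, all `Ψ m` with `m ≥ k` map the
ball of radius `r k - 2` into the compact set `Φ k ⁻¹' closedBall 0 (r k - 1)`. Being uniformly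
bounded, they are uniformly Lipschitz on a smaller ball by the Schwarz lemma, and since
`Ψ m = Ψ (m + 1) ∘ (Φ (m + 1) ∘ Ψ m)` with `Φ (m + 1) ∘ Ψ m` within `2⁻¹ ^ m` of the identity,
they converge as well. Passing to the limit in `Φ m ∘ Ψ m = id` and `Ψ m ∘ Φ m = id` shows that
the two limits are mutually inverse.
-/

open Filter Topology

section GeometricConvergence

variable {α β : Type*}

theorem dist_le_of_dist_succ_le_geometric_of_tendsto [PseudoMetricSpace α] {u : ℕ → α}
    {C : ℝ} {k : ℕ} (hu : ∀ n ≥ k, dist (u n) (u (n + 1)) ≤ C * 2⁻¹ ^ n) {a : α}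
    (ha : Tendsto u atTop (𝓝 a)) {n : ℕ} (hn : k ≤ n) : dist (u n) a ≤ 2 * C * 2⁻¹ ^ n := by
  obtain ⟨j, rfl⟩ := Nat.exists_eq_add_of_le' hn
  have hshift : ∀ i, dist (u (i + k)) (u (i + 1 + k)) ≤ C * 2⁻¹ ^ k * 2⁻¹ ^ i := fun i => by
    simpa [pow_add, mul_comm, mul_left_comm, mul_assoc, add_right_comm i k 1]
      using hu (i + k) (by omega)
  have := dist_le_of_le_geometric_of_tendsto 2⁻¹ _ (by norm_num) hshift
    ((tendsto_add_atTop_iff_nat k).2 ha) j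
  convert this using 1
  rw [pow_add]
  ring

theorem cauchySeq_of_dist_succ_le_geometric [PseudoMetricSpace α] {u : ℕ → α} {C : ℝ}
    {k : ℕ} (hu : ∀ n ≥ k, dist (u n) (u (n + 1)) ≤ C * 2⁻¹ ^ n) : CauchySeq u := by
  refine (cauchySeq_shift k).1 (cauchySeq_of_le_geometric 2⁻¹ (C * 2⁻¹ ^ k) (by norm_num) ?_)
  intro i
  simpa [pow_add, mul_comm, mul_left_comm, mul_assoc, add_right_comm i k 1]
    using hu (i + k) (by omega)

noncomputable def pointwiseLim [TopologicalSpace β] [Nonempty β] (F : ℕ → α → β) : α → β :=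
  fun x => limUnder atTop fun n => F n x

theorem tendstoUniformlyOn_pointwiseLim_of_dist_succ_le_geometric
    [PseudoMetricSpace β] [CompleteSpace β] [Nonempty β] {F : ℕ → α → β} {s : Set α}
    {C : ℝ} {k : ℕ} (hF : ∀ n ≥ k, ∀ x ∈ s, dist (F n x) (F (n + 1) x) ≤ C * 2⁻¹ ^ n) :
    TendstoUniformlyOn F (pointwiseLim F) atTop s := by
  have hlim : ∀ x ∈ s, Tendsto (fun n => F n x) atTop (𝓝 (pointwiseLim F x)) :=
    fun x hx => (cauchySeq_of_dist_succ_le_geometric fun n hn => hF n hn x hx).tendsto_limUnder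
  have hsmall : Tendsto (fun n : ℕ => 2 * C * (2:ℝ)⁻¹ ^ n) atTop (𝓝 0) := by
    simpa using (tendsto_pow_atTop_nhds_zero_of_lt_one (by norm_num : (0:ℝ) ≤ 2⁻¹)
      (by norm_num)).const_mul (2 * C)
  rw [Metric.tendstoUniformlyOn_iff]
  intro ε hε
  filter_upwards [eventually_ge_atTop k, hsmall.eventually (gt_mem_nhds hε)] with n hkn hn x hx
  rw [dist_comm]
  exact (dist_le_of_dist_succ_le_geometric_of_tendsto (fun m hm => hF m hm x hx)
    (hlim x hx) hkn).trans_lt hn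

end GeometricConvergence

theorem mapsTo_closedBall_of_norm_le {α G : Type*} [SeminormedAddCommGroup G] {f : α → G}
    {s : Set α} {c : α} (hc : c ∈ s) {C : ℝ} (hf : ∀ y ∈ s, ‖f y‖ ≤ C) :
    MapsTo f s (closedBall (f c) (2 * C)) := fun y hy =>
  mem_closedBall.2 <| (dist_le_norm_add_norm _ _).trans (by linarith [hf y hy, hf c hc])

section HolomorphicLimit

variable {E G : Type*} [NormedAddCommGroup E] [NormedSpace ℂ E]
  [NormedAddCommGroup G] [NormedSpace ℂ G]

theorem norm_fderiv_le_of_forall_norm_le {f : E → G} {c : E} {R C : ℝ} (hR : 0 < R)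
    (hf : DifferentiableOn ℂ f (ball c R)) (hC : ∀ y ∈ ball c R, ‖f y‖ ≤ C) :
    ‖fderiv ℂ f c‖ ≤ 2 * C / R :=
  Complex.norm_fderiv_le_div_of_mapsTo_ball hf
    (mapsTo_closedBall_of_norm_le (mem_ball_self hR) hC) hR

theorem UniformCauchySeqOn.fderiv_ball {ι : Type*} {l : Filter ι} {F : ι → E → G} {c : E}
    {R : ℝ} (hR : 0 < R) (hF : ∀ n, DifferentiableOn ℂ (F n) (ball c (2 * R)))
    (hu : UniformCauchySeqOn F l (ball c (2 * R))) :
    UniformCauchySeqOn (fun n => fderiv ℂ (F n)) l (ball c R) := by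
  intro U hU
  obtain ⟨ε, hε, hεU⟩ := Metric.mem_uniformity_dist.1 hU
  filter_upwards [hu _ (dist_mem_uniformity (by positivity : 0 < ε * R / 4))] with p hp y hy
  have hsub : ball y R ⊆ ball c (2 * R) := by
    refine ball_subset_ball' ?_
    rw [mem_ball] at hy
    linarith
  have hdiff : DifferentiableOn ℂ (F p.1 - F p.2) (ball y R) :=
    ((hF p.1).sub (hF p.2)).mono hsub
  have hbound : ∀ z ∈ ball y R, ‖(F p.1 - F p.2) z‖ ≤ ε * R / 4 := fun z hz => by
    rw [Pi.sub_apply, ← dist_eq_norm]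
    exact (hp z (hsub hz)).le
  apply hεU
  have hy_nhds : ball c (2 * R) ∈ 𝓝 y := isOpen_ball.mem_nhds (hsub (mem_ball_self hR))
  rw [dist_eq_norm, ← fderiv_sub ((hF p.1).differentiableAt hy_nhds)
    ((hF p.2).differentiableAt hy_nhds)]
  calc ‖fderiv ℂ (F p.1 - F p.2) y‖ ≤ 2 * (ε * R / 4) / R :=
        norm_fderiv_le_of_forall_norm_le hR hdiff hbound
    _ < ε := by field_simp; linarith

theorem TendstoUniformlyOn.differentiableAt [CompleteSpace G] {ι : Type*} {l : Filter ι}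
    [l.NeBot] {F : ι → E → G} {f : E → G} {s : Set E} {x : E} (hFf : TendstoUniformlyOn F f l s)
    (hF : ∀ n, DifferentiableOn ℂ (F n) s) (hs : s ∈ 𝓝 x) : DifferentiableAt ℂ f x := by
  obtain ⟨ε, hε, hεs⟩ := Metric.mem_nhds_iff.1 hs
  have hR : 0 < ε / 2 := by positivity
  have hsub : ball x (2 * (ε / 2)) ⊆ s := by rwa [mul_div_cancel₀ _ two_ne_zero]
  have hd := UniformCauchySeqOn.fderiv_ball hR (fun n => (hF n).mono hsub)
    (hFf.mono hsub).uniformCauchySeqOn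
  have hlim : ∀ y ∈ ball x (ε / 2), Tendsto (fun n => fderiv ℂ (F n) y) l
      (𝓝 (limUnder l fun n => fderiv ℂ (F n) y)) := fun y hy =>
    tendsto_nhds_limUnder (CompleteSpace.complete (hd.cauchy_map hy))
  have hball : ball x (ε / 2) ⊆ s := (ball_subset_ball (by linarith)).trans hεs
  refine (hasFDerivAt_of_tendstoUniformlyOn isOpen_ball (hd.tendstoUniformlyOn_of_tendsto hlim)
    (fun n y hy => ?_) (fun y hy => hFf.tendsto_at (hball hy))
    (mem_ball_self hR)).differentiableAt
  exact ((hF n).differentiableAt (mem_of_superset (isOpen_ball.mem_nhds hy) hball)).hasFDerivAt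

end HolomorphicLimit

theorem IsPreconnected.norm_lt_of_norm_sub_lt {X E : Type*} [TopologicalSpace X]
    [SeminormedAddCommGroup E] {f g : X → E} (hf : Continuous f) (hg : Continuous g) {R δ : ℝ}
    (hfg : ∀ x, ‖f x‖ < R → ‖g x - f x‖ < δ) {V : Set X} (hV : IsPreconnected V)
    (hgV : ∀ x ∈ V, ‖g x‖ < R - δ) {x₀ : X} (hx₀ : x₀ ∈ V) (h₀ : ‖f x₀‖ < R) :
    ∀ x ∈ V, ‖f x‖ < R := by
  have hv : IsOpen {x | δ < ‖f x‖ - ‖g x‖} := isOpen_lt continuous_const (hf.norm.sub hg.norm)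
  refine fun x hx => hV.subset_left_of_subset_union (isOpen_lt hf.norm continuous_const) hv
    ?_ (fun x hx => ?_) ⟨x₀, hx₀, h₀⟩ hx
  · refine Set.disjoint_left.2 fun x (hxR : ‖f x‖ < R) (hxδ : δ < ‖f x‖ - ‖g x‖) => ?_
    linarith [hfg x hxR, norm_sub_norm_le (f x) (g x), norm_sub_rev (f x) (g x)]
  · by_cases hfx : ‖f x‖ < R
    · exact Or.inl hfx
    · exact Or.inr (show δ < ‖f x‖ - ‖g x‖ by linarith [hgV x hx])

section PushOutSequence

variable {E : Type*} [NormedAddCommGroup E] [NormedSpace ℂ E]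

structure IsPushOutSequence (Φ Ψ : ℕ → E → E) (r : ℕ → ℝ) : Prop where
  differentiable : ∀ k, Differentiable ℂ (Φ k)
  differentiable_inv : ∀ k, Differentiable ℂ (Ψ k)
  inv_apply : ∀ k z, Ψ k (Φ k z) = z
  apply_inv : ∀ k w, Φ k (Ψ k w) = w
  radius_succ : ∀ k, r k + 1 ≤ r (k + 1)
  norm_sub_lt : ∀ k z, ‖Φ k z‖ < r k → ‖Φ (k + 1) z - Φ k z‖ < 2⁻¹ ^ k

namespace IsPushOutSequence

variable {Φ Ψ : ℕ → E → E} {r : ℕ → ℝ} (h : IsPushOutSequence Φ Ψ r)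
include h

theorem monotone_radius : Monotone r :=
  monotone_nat_of_le_succ fun k => by linarith [h.radius_succ k]

theorem exists_radius_gt (x : ℝ) : ∃ k, 1 ≤ k ∧ x < r k := by
  have hgrowth : ∀ k : ℕ, r 0 + k ≤ r k := fun k => by
    induction k with
    | zero => simp
    | succ k ih => push_cast; linarith [h.radius_succ k]
  obtain ⟨k, hk⟩ := exists_nat_gt (x - r 0)
  refine ⟨k + 1, by omega, ?_⟩
  have := hgrowth (k + 1)
  push_cast at this
  linarith

theorem norm_apply_lt_of_le {k m : ℕ} (hkm : k ≤ m) {z : E} (hz : ‖Φ k z‖ < r k) :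
    ‖Φ m z‖ < r m := by
  induction m, hkm using Nat.le_induction with
  | base => exact hz
  | succ m _ ih =>
    have hstep := h.norm_sub_lt m z ih
    have : (2:ℝ)⁻¹ ^ m ≤ 1 := pow_le_one₀ (by norm_num) (by norm_num)
    linarith [norm_le_norm_add_norm_sub' (Φ (m + 1) z) (Φ m z), h.radius_succ m]

theorem dist_apply_succ_le {k n : ℕ} (hkn : k ≤ n) {z : E} (hz : ‖Φ k z‖ < r k) :
    dist (Φ n z) (Φ (n + 1) z) ≤ 2⁻¹ ^ n := by
  rw [dist_comm, dist_eq_norm]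
  exact (h.norm_sub_lt n z (h.norm_apply_lt_of_le hkn hz)).le

theorem isOpen_preimage_ball (k : ℕ) : IsOpen (Φ k ⁻¹' ball 0 (r k)) :=
  isOpen_ball.preimage (h.differentiable k).continuous

section Limit

variable [CompleteSpace E]

theorem tendstoUniformlyOn_pointwiseLim (k : ℕ) :
    TendstoUniformlyOn Φ (pointwiseLim Φ) atTop (Φ k ⁻¹' ball 0 (r k)) :=
  tendstoUniformlyOn_pointwiseLim_of_dist_succ_le_geometric (C := 1) fun _ hn _ hz => by
    rw [one_mul]
    exact h.dist_apply_succ_le hn (mem_ball_zero_iff.1 hz)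

theorem tendstoLocallyUniformlyOn_pointwiseLim :
    TendstoLocallyUniformlyOn Φ (pointwiseLim Φ) atTop (⋃ k, Φ k ⁻¹' ball 0 (r k)) :=
  tendstoLocallyUniformlyOn_of_forall_exists_nhds fun _ hz =>
    let ⟨k, hk⟩ := mem_iUnion.1 hz
    ⟨_, mem_nhdsWithin_of_mem_nhds ((h.isOpen_preimage_ball k).mem_nhds hk),
      h.tendstoUniformlyOn_pointwiseLim k⟩

theorem differentiableAt_pointwiseLim {k : ℕ} {z : E} (hz : Φ k z ∈ ball 0 (r k)) :
    DifferentiableAt ℂ (pointwiseLim Φ) z :=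
  (h.tendstoUniformlyOn_pointwiseLim k).differentiableAt
    (fun n => (h.differentiable n).differentiableOn) ((h.isOpen_preimage_ball k).mem_nhds hz)

theorem differentiableOn_pointwiseLim :
    DifferentiableOn ℂ (pointwiseLim Φ) (⋃ k, Φ k ⁻¹' ball 0 (r k)) := fun _ hz =>
  let ⟨_, hk⟩ := mem_iUnion.1 hz
  (h.differentiableAt_pointwiseLim hk).differentiableWithinAt

theorem mem_iUnion_iff_isBounded {z : E} :
    z ∈ ⋃ k, Φ k ⁻¹' ball 0 (r k) ↔ Bornology.IsBounded (range fun k => Φ k z) := by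
  constructor
  · intro hz
    obtain ⟨k, hk⟩ := mem_iUnion.1 hz
    exact isBounded_range_of_tendsto _ ((h.tendstoUniformlyOn_pointwiseLim k).tendsto_at hk)
  · intro hb
    obtain ⟨R, hR⟩ := hb.exists_norm_le
    obtain ⟨k, -, hk⟩ := h.exists_radius_gt R
    exact mem_iUnion.2 ⟨k, mem_ball_zero_iff.2 ((hR _ ⟨k, rfl⟩).trans_lt hk)⟩

end Limit

theorem image_inv_eq_preimage (k : ℕ) (s : Set E) : Ψ k '' s = Φ k ⁻¹' s :=
  congrFun (image_eq_preimage_of_inverse (h.apply_inv k) (h.inv_apply k)) s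

theorem norm_apply_lt_norm_apply_succ_add {m : ℕ} (hm : 2 ≤ r m) {z : E}
    (hz : ‖Φ (m + 1) z‖ + 2⁻¹ ^ m < r m) : ‖Φ m z‖ < ‖Φ (m + 1) z‖ + 2⁻¹ ^ m := by
  have hδ : (2:ℝ)⁻¹ ^ m ≤ 1 := pow_le_one₀ (by norm_num) (by norm_num)
  have hV : IsPreconnected (Φ (m + 1) ⁻¹' ball 0 (r m - 2⁻¹ ^ m)) := by
    rw [← h.image_inv_eq_preimage]
    exact (convex_ball _ _).isPreconnected.image _ (h.differentiable_inv _).continuous.continuousOn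
  have hx₀ : ‖Φ (m + 1) (Ψ m 0)‖ < r m - 2⁻¹ ^ m := by
    have := h.norm_sub_lt m (Ψ m 0) (by rw [h.apply_inv, norm_zero]; linarith)
    rw [h.apply_inv, sub_zero] at this
    linarith
  have hzm : ‖Φ m z‖ < r m :=
    hV.norm_lt_of_norm_sub_lt (h.differentiable m).continuous (h.differentiable (m + 1)).continuous
      (h.norm_sub_lt m) (fun _ hx => mem_ball_zero_iff.1 hx) (mem_ball_zero_iff.2 hx₀)
      (by rw [h.apply_inv, norm_zero]; linarith) z (mem_ball_zero_iff.2 (by linarith))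
  linarith [h.norm_sub_lt m z hzm, norm_le_norm_add_norm_sub' (Φ m z) (Φ (m + 1) z),
    norm_sub_rev (Φ m z) (Φ (m + 1) z)]

theorem norm_apply_lt_of_norm_apply_lt {k m : ℕ} (hk : 2 ≤ r k) (hkm : k ≤ m) {z : E}
    (hz : ‖Φ m z‖ < r k - 2 + 2 * 2⁻¹ ^ m) : ‖Φ k z‖ < r k - 2 + 2 * 2⁻¹ ^ k := by
  induction m, hkm using Nat.le_induction generalizing z with
  | base => exact hz
  | succ m hkm ih =>
    have hrm : r k ≤ r m := h.monotone_radius hkm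
    have hδ : (2:ℝ)⁻¹ ^ m ≤ 1 := pow_le_one₀ (by norm_num) (by norm_num)
    have hhalf : 2 * (2:ℝ)⁻¹ ^ (m + 1) = 2⁻¹ ^ m := by rw [pow_succ]; ring
    rw [hhalf] at hz
    apply ih
    linarith [h.norm_apply_lt_norm_apply_succ_add (hk.trans hrm) (z := z) (by linarith)]

theorem inv_mem_preimage_closedBall {k m : ℕ} (hk₁ : 1 ≤ k) (hk : 2 ≤ r k) (hkm : k ≤ m)
    {w : E} (hw : ‖w‖ < r k - 2) : Ψ m w ∈ Φ k ⁻¹' closedBall 0 (r k - 1) := by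
  have hlt := h.norm_apply_lt_of_norm_apply_lt hk hkm (z := Ψ m w)
    (by rw [h.apply_inv]; linarith [pow_pos (by norm_num : (0:ℝ) < 2⁻¹) m])
  have hδ : (2:ℝ)⁻¹ ^ k ≤ 2⁻¹ ^ 1 := pow_le_pow_of_le_one (by norm_num) (by norm_num) hk₁
  rw [mem_preimage, mem_closedBall_zero_iff]
  linarith

theorem dist_inv_succ_le {k : ℕ} {M : ℝ} (hM : ∀ m ≥ k, ∀ w : E, ‖w‖ < r k - 2 → ‖Ψ m w‖ ≤ M)
    {m : ℕ} (hkm : k ≤ m) {w : E} (hw : ‖w‖ < r k - 3) :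
    dist (Ψ m w) (Ψ (m + 1) w) ≤ 2 * M * 2⁻¹ ^ m := by
  have hM₀ : 0 ≤ M := (norm_nonneg _).trans (hM m hkm w (by linarith))
  have hstep : dist (Φ (m + 1) (Ψ m w)) w < 2⁻¹ ^ m := by
    rw [dist_eq_norm]
    simpa only [h.apply_inv] using h.norm_sub_lt m (Ψ m w)
      (by rw [h.apply_inv]; linarith [h.monotone_radius hkm])
  have hδ : (2:ℝ)⁻¹ ^ m ≤ 1 := pow_le_one₀ (by norm_num) (by norm_num)
  have hball : ∀ y ∈ ball w 1, ‖y‖ < r k - 2 := fun y hy => by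
    linarith [norm_le_norm_add_norm_sub' y w, mem_ball_iff_norm.1 hy]
  have hSchwarz := Complex.dist_le_div_mul_dist_of_mapsTo_ball
    (h.differentiable_inv (m + 1)).differentiableOn
    (mapsTo_closedBall_of_norm_le (mem_ball_self one_pos)
      fun y hy => hM (m + 1) (by omega) y (hball y hy))
    (mem_ball.2 (hstep.trans_le hδ))
  rw [h.inv_apply, div_one] at hSchwarz
  calc dist (Ψ m w) (Ψ (m + 1) w) ≤ 2 * M * dist (Φ (m + 1) (Ψ m w)) w := hSchwarz
    _ ≤ 2 * M * 2⁻¹ ^ m := by gcongr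

section Inverse

variable [ProperSpace E]

theorem isCompact_preimage_closedBall (k : ℕ) (ρ : ℝ) : IsCompact (Φ k ⁻¹' closedBall 0 ρ) := by
  rw [← h.image_inv_eq_preimage]
  exact (isCompact_closedBall 0 ρ).image (h.differentiable_inv k).continuous

theorem exists_norm_inv_le {k : ℕ} (hk₁ : 1 ≤ k) (hk : 2 ≤ r k) :
    ∃ M, ∀ m ≥ k, ∀ w : E, ‖w‖ < r k - 2 → ‖Ψ m w‖ ≤ M := by
  obtain ⟨M, hM⟩ := (h.isCompact_preimage_closedBall k (r k - 1)).isBounded.exists_norm_le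
  exact ⟨M, fun m hm w hw => hM _ (h.inv_mem_preimage_closedBall hk₁ hk hm hw)⟩

theorem tendstoUniformlyOn_pointwiseLim_inv {k : ℕ} (hk₁ : 1 ≤ k) (hk : 2 ≤ r k) :
    TendstoUniformlyOn Ψ (pointwiseLim Ψ) atTop (ball 0 (r k - 3)) := by
  obtain ⟨M, hM⟩ := h.exists_norm_inv_le hk₁ hk
  exact tendstoUniformlyOn_pointwiseLim_of_dist_succ_le_geometric fun m hm w hw =>
    h.dist_inv_succ_le hM hm (mem_ball_zero_iff.1 hw)

theorem exists_nhds_tendstoUniformlyOn_pointwiseLim_inv (w : E) :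
    ∃ t ∈ 𝓝 w, TendstoUniformlyOn Ψ (pointwiseLim Ψ) atTop t := by
  obtain ⟨k, hk₁, hk⟩ := h.exists_radius_gt (‖w‖ + 5)
  exact ⟨_, isOpen_ball.mem_nhds (mem_ball_zero_iff.2 (by linarith)),
    h.tendstoUniformlyOn_pointwiseLim_inv hk₁ (by linarith [norm_nonneg w])⟩

theorem tendstoLocallyUniformly_pointwiseLim_inv :
    TendstoLocallyUniformly Ψ (pointwiseLim Ψ) atTop :=
  tendstoLocallyUniformly_of_forall_exists_nhds h.exists_nhds_tendstoUniformlyOn_pointwiseLim_inv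

theorem differentiable_pointwiseLim_inv : Differentiable ℂ (pointwiseLim Ψ) := fun w =>
  let ⟨_, ht, hΨ⟩ := h.exists_nhds_tendstoUniformlyOn_pointwiseLim_inv w
  hΨ.differentiableAt (fun m => (h.differentiable_inv m).differentiableOn) ht

theorem pointwiseLim_inv_pointwiseLim {z : E} (hz : z ∈ ⋃ k, Φ k ⁻¹' ball 0 (r k)) :
    pointwiseLim Ψ (pointwiseLim Φ z) = z := by
  obtain ⟨k, hk⟩ := mem_iUnion.1 hz
  have hcomp := h.tendstoLocallyUniformly_pointwiseLim_inv.tendsto_comp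
    (h.differentiable_pointwiseLim_inv _).continuousAt
    ((h.tendstoUniformlyOn_pointwiseLim k).tendsto_at hk)
  simp only [h.inv_apply] at hcomp
  exact tendsto_nhds_unique hcomp tendsto_const_nhds

theorem pointwiseLim_pointwiseLim_inv (w : E) :
    pointwiseLim Ψ w ∈ ⋃ k, Φ k ⁻¹' ball 0 (r k) ∧ pointwiseLim Φ (pointwiseLim Ψ w) = w := by
  obtain ⟨k, hk₁, hk⟩ := h.exists_radius_gt (‖w‖ + 5)
  have hk₂ : 2 ≤ r k := by linarith [norm_nonneg w]
  have hΨw : Tendsto (fun m => Ψ m w) atTop (𝓝 (pointwiseLim Ψ w)) :=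
    (h.tendstoUniformlyOn_pointwiseLim_inv hk₁ hk₂).tendsto_at (mem_ball_zero_iff.2 (by linarith))
  set K := Φ k ⁻¹' closedBall 0 (r k - 1)
  have hKΩ : K ⊆ Φ k ⁻¹' ball 0 (r k) := preimage_mono (closedBall_subset_ball (by linarith))
  have hΨK : ∀ᶠ m in atTop, Ψ m w ∈ K := eventually_atTop.2
    ⟨k, fun m hm => h.inv_mem_preimage_closedBall hk₁ hk₂ hm (by linarith)⟩
  have hlimK : pointwiseLim Ψ w ∈ K :=
    (isClosed_closedBall.preimage (h.differentiable k).continuous).mem_of_tendsto hΨw hΨK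
  refine ⟨mem_iUnion.2 ⟨k, hKΩ hlimK⟩, ?_⟩
  have hcomp := (h.tendstoUniformlyOn_pointwiseLim k).tendsto_comp
    (h.differentiableAt_pointwiseLim (hKΩ hlimK)).continuousAt.continuousWithinAt
    (tendsto_nhdsWithin_iff.2 ⟨hΨw, hΨK.mono fun _ hm => hKΩ hm⟩)
  simp only [h.apply_inv] at hcomp
  exact tendsto_nhds_unique hcomp tendsto_const_nhds

end Inverse

end IsPushOutSequence

end PushOutSequence

/-- Fatou–Bieberbach construction: a push-out sequence of automorphisms converges
on the set of points with bounded orbits to a biholomorphism onto ℂ^N. -/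
theorem stmt_8 {N : ℕ}
    (Φs : ℕ → (Fin N → ℂ) → (Fin N → ℂ))
    (hΦs : ∀ k, IsAutomorphism (Φs k))
    (r : ℕ → ℝ) (hr : ∀ k, r k + 1 ≤ r (k + 1))
    (happrox : ∀ k, ∀ z : Fin N → ℂ, Φs k z ∈ ball (0 : Fin N → ℂ) (r k) →
      ‖Φs (k + 1) z - Φs k z‖ < (2 : ℝ)⁻¹ ^ k) :
    IsOpen (⋃ k : ℕ, Φs k ⁻¹' ball (0 : Fin N → ℂ) (r k)) ∧
    ∃ Φ : (Fin N → ℂ) → (Fin N → ℂ),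
      (∀ K : Set (Fin N → ℂ),
        K ⊆ (⋃ k : ℕ, Φs k ⁻¹' ball (0 : Fin N → ℂ) (r k)) → IsCompact K →
        TendstoUniformlyOn Φs Φ Filter.atTop K) ∧
      BiholoOnto (⋃ k : ℕ, Φs k ⁻¹' ball (0 : Fin N → ℂ) (r k)) Φ ∧
      (⋃ k : ℕ, Φs k ⁻¹' ball (0 : Fin N → ℂ) (r k)) =
        {z : Fin N → ℂ | Bornology.IsBounded (Set.range fun k => Φs k z)} := by
  choose Ψs hΨs hleft hright using fun k => (hΦs k).2
  have h : IsPushOutSequence Φs Ψs r := ⟨fun k => (hΦs k).1, hΨs, hleft, hright, hr,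
    fun k z hz => happrox k z (mem_ball_zero_iff.2 hz)⟩
  have hΩ : IsOpen (⋃ k, Φs k ⁻¹' ball (0 : Fin N → ℂ) (r k)) :=
    isOpen_iUnion h.isOpen_preimage_ball
  refine ⟨hΩ, pointwiseLim Φs, fun K hK hKc => ?_,
    ⟨h.differentiableOn_pointwiseLim, pointwiseLim Ψs, h.differentiable_pointwiseLim_inv,
      fun z hz => h.pointwiseLim_inv_pointwiseLim hz, h.pointwiseLim_pointwiseLim_inv⟩,
    Set.ext fun z => h.mem_iUnion_iff_isBounded⟩
  exact (tendstoLocallyUniformlyOn_iff_forall_isCompact hΩ).1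
    h.tendstoLocallyUniformlyOn_pointwiseLim K hK hKc
end

section
/- Let N > 1 and let {a_j}_{j∈ℕ} be a tame discrete sequence without repetitions in ℂ^N. If {a'_j}_{j∈ℕ} is a sequence in ℂ^N without repetitions such that a'_j = a_j for all but finitely many j, then {a'_j}_{j∈ℕ} is again a tame discrete sequence without repetitions in ℂ^N. -/
open Metric Set

/-! Composing with an automorphism that straightens `a`, only finitely many terms `b j` of the
new sequence differ from `e j`, and they can be put in place one at a time from the last one
down: if `b k = e k` for all `k > M`, it suffices to move `b M` to `e M` by an automorphism fixing
every `e k` with `k > M`. The entire function `ζ ↦ 1 / Γ(M + 1 - ζ)` vanishes exactly at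
`ζ = M + 1, M + 2, …` and equals `1` at `M`, so the shears `z ↦ z + Γ(M + 1 - z₀)⁻¹ • v` with
`v₀ = 0` fix those `e k`, and so do the linear shears `z ↦ z + (c z_l) • e₀` with `l ≠ 0`.
A linear shear first moves `b M` off the zeros of the cutoff (adding `I` to its first
coordinate, since `k + I` is never a natural number); two cutoff shears and one linear shear in
the plane of the first two coordinates then carry it to `e M`. -/

open Complex Function

namespace IsAutomorphism

variable {N : ℕ}

protected lemma id : IsAutomorphism (id : (Fin N → ℂ) → (Fin N → ℂ)) :=
  ⟨differentiable_id, id, differentiable_id, fun _ => rfl, fun _ => rfl⟩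

lemma comp {Φ Ψ : (Fin N → ℂ) → (Fin N → ℂ)} (hΦ : IsAutomorphism Φ)
    (hΨ : IsAutomorphism Ψ) : IsAutomorphism (Φ ∘ Ψ) := by
  obtain ⟨hΦd, Φ', hΦ'd, hΦl, hΦr⟩ := hΦ
  obtain ⟨hΨd, Ψ', hΨ'd, hΨl, hΨr⟩ := hΨ
  exact ⟨hΦd.comp hΨd, Ψ' ∘ Φ', hΨ'd.comp hΦ'd, fun z => by simp [hΦl, hΨl],
    fun w => by simp [hΦr, hΨr]⟩

lemma injective {Φ : (Fin N → ℂ) → (Fin N → ℂ)} (hΦ : IsAutomorphism Φ) : Injective Φ :=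
  LeftInverse.injective hΦ.2.choose_spec.2.1

end IsAutomorphism

lemma isAutomorphism_add_smul {N : ℕ} (v : Fin N → ℂ) {g : (Fin N → ℂ) → ℂ}
    (hg : Differentiable ℂ g) (hgv : ∀ z (c : ℂ), g (z + c • v) = g z) :
    IsAutomorphism fun z => z + g z • v := by
  refine ⟨differentiable_id.add (hg.smul_const v), fun z => z - g z • v,
    differentiable_id.sub (hg.smul_const v), fun z => ?_, fun z => ?_⟩
  · simp only [hgv, add_sub_cancel_right]
  · show z - g z • v + g (z - g z • v) • v = z
    rw [sub_eq_add_neg, ← neg_smul, hgv, neg_smul, neg_add_cancel_right]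

noncomputable def tailCutoff (M : ℕ) (ζ : ℂ) : ℂ := (Gamma (M + 1 - ζ))⁻¹

lemma differentiable_tailCutoff (M : ℕ) : Differentiable ℂ (tailCutoff M) :=
  differentiable_one_div_Gamma.comp ((differentiable_const _).sub differentiable_id)

lemma tailCutoff_eq_zero_iff {M : ℕ} {ζ : ℂ} : tailCutoff M ζ = 0 ↔ ∃ k : ℕ, M < k ∧ ζ = k := by
  rw [tailCutoff, inv_eq_zero, Gamma_eq_zero_iff]
  constructor
  · rintro ⟨m, hm⟩
    exact ⟨M + 1 + m, by omega, by push_cast; linear_combination -hm⟩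
  · rintro ⟨k, hk, rfl⟩
    exact ⟨k - (M + 1), by push_cast [Nat.cast_sub (show M + 1 ≤ k by omega)]; ring⟩

lemma tailCutoff_self (M : ℕ) : tailCutoff M M = 1 := by
  simp [tailCutoff]

section Tail

variable {N : ℕ} [NeZero N]

def FixesTail (M : ℕ) (T : (Fin N → ℂ) → (Fin N → ℂ)) : Prop :=
  ∀ k : ℕ, M < k → T (Pi.single 0 (k : ℂ)) = Pi.single 0 (k : ℂ)

lemma fixesTail_id (M : ℕ) : FixesTail M (id : (Fin N → ℂ) → (Fin N → ℂ)) :=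
  fun _ _ => rfl

lemma FixesTail.comp {M : ℕ} {T S : (Fin N → ℂ) → (Fin N → ℂ)} (hT : FixesTail M T)
    (hS : FixesTail M S) : FixesTail M (T ∘ S) :=
  fun k hk => by rw [comp_apply, hS k hk, hT k hk]

def axisShear (l : Fin N) (c : ℂ) (z : Fin N → ℂ) : Fin N → ℂ :=
  z + (c * z l) • Pi.single 0 1

lemma isAutomorphism_axisShear {l : Fin N} (hl : l ≠ 0) (c : ℂ) :
    IsAutomorphism (axisShear l c) :=
  isAutomorphism_add_smul _ (by fun_prop) fun z d => by simp [hl]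

lemma fixesTail_axisShear {l : Fin N} (hl : l ≠ 0) (M : ℕ) (c : ℂ) :
    FixesTail M (axisShear l c) :=
  fun k _ => by simp [axisShear, hl]

noncomputable def cutoffShear (M : ℕ) (v : Fin N → ℂ) (z : Fin N → ℂ) : Fin N → ℂ :=
  z + tailCutoff M (z 0) • v

lemma isAutomorphism_cutoffShear (M : ℕ) {v : Fin N → ℂ} (hv : v 0 = 0) :
    IsAutomorphism (cutoffShear M v) :=
  isAutomorphism_add_smul v ((differentiable_tailCutoff M).comp (by fun_prop))
    fun z c => by simp [hv]

lemma fixesTail_cutoffShear (M : ℕ) (v : Fin N → ℂ) : FixesTail M (cutoffShear M v) :=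
  fun k hk => by simp [cutoffShear, tailCutoff_eq_zero_iff.2 ⟨k, hk, rfl⟩]

lemma exists_fixesTail_tailCutoff_ne_zero {M : ℕ} {p : Fin N → ℂ}
    (hp : ∀ k : ℕ, M < k → p ≠ Pi.single 0 (k : ℂ)) :
    ∃ T, IsAutomorphism T ∧ FixesTail M T ∧ tailCutoff M (T p 0) ≠ 0 := by
  by_cases hcut : tailCutoff M (p 0) = 0
  · obtain ⟨k, hk, hpk⟩ := tailCutoff_eq_zero_iff.1 hcut
    obtain ⟨l, hl0, hl⟩ : ∃ l, l ≠ 0 ∧ p l ≠ 0 := by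
      by_contra! hoff
      refine hp k hk (funext fun i => ?_)
      rcases eq_or_ne i 0 with rfl | hi
      · simp [hpk]
      · simp [hi, hoff i hi]
    refine ⟨axisShear l (I / p l), isAutomorphism_axisShear hl0 _, fixesTail_axisShear hl0 _ _, ?_⟩
    rw [Ne, tailCutoff_eq_zero_iff]
    rintro ⟨m, -, hm⟩
    have him := congrArg im hm
    simp [axisShear, hpk, hl] at him
  · exact ⟨id, IsAutomorphism.id, fixesTail_id M, hcut⟩

end Tail

section Plane

variable {n : ℕ}

lemma exists_fixesTail_apply_eq_single_of_tailCutoff_ne_zero {M : ℕ} {p : Fin (n + 2) → ℂ}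
    (hp : tailCutoff M (p 0) ≠ 0) :
    ∃ T, IsAutomorphism T ∧ FixesTail M T ∧ T p = Pi.single 0 (M : ℂ) := by
  set v : Fin (n + 2) → ℂ := (tailCutoff M (p 0))⁻¹ • (Pi.single 1 1 - update p 0 0)
  have hv : v 0 = 0 := by simp [v]
  have hmove₁ : cutoffShear M v p = Pi.single 0 (p 0) + Pi.single 1 1 := by
    funext i
    rcases eq_or_ne i 0 with rfl | hi
    · simp [cutoffShear, hv]
    · simp [cutoffShear, v, hi, hp]
  have h10 : (1 : Fin (n + 2)) ≠ 0 := by simp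
  have hmove₂ : axisShear (1 : Fin (n + 2)) (M - p 0) (Pi.single 0 (p 0) + Pi.single 1 1) =
      Pi.single 0 (M : ℂ) + Pi.single 1 1 := by
    funext i
    rcases eq_or_ne i 0 with rfl | hi
    · simp [axisShear, h10]
    · simp [axisShear, hi]
  have hmove₃ : cutoffShear M (-Pi.single 1 1) (Pi.single 0 (M : ℂ) + Pi.single 1 1) =
      (Pi.single 0 (M : ℂ) : Fin (n + 2) → ℂ) := by
    funext i
    simp [cutoffShear, tailCutoff_self]
  refine ⟨cutoffShear M (-Pi.single 1 1) ∘ axisShear 1 (M - p 0) ∘ cutoffShear M v,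
    (isAutomorphism_cutoffShear M (by simp)).comp
      ((isAutomorphism_axisShear h10 _).comp (isAutomorphism_cutoffShear M hv)),
    (fixesTail_cutoffShear M _).comp
      ((fixesTail_axisShear h10 M _).comp (fixesTail_cutoffShear M v)), ?_⟩
  simp only [comp_apply, hmove₁, hmove₂, hmove₃]

lemma exists_fixesTail_apply_eq_single {M : ℕ} {p : Fin (n + 2) → ℂ}
    (hp : ∀ k : ℕ, M < k → p ≠ Pi.single 0 (k : ℂ)) :
    ∃ T, IsAutomorphism T ∧ FixesTail M T ∧ T p = Pi.single 0 (M : ℂ) := by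
  obtain ⟨T, hT, hTtail, hTp⟩ := exists_fixesTail_tailCutoff_ne_zero hp
  obtain ⟨S, hS, hStail, hSp⟩ := exists_fixesTail_apply_eq_single_of_tailCutoff_ne_zero hTp
  exact ⟨S ∘ T, hS.comp hT, hStail.comp hTtail, hSp⟩

lemma exists_isAutomorphism_apply_eq_single (M : ℕ) {b : ℕ → Fin (n + 2) → ℂ}
    (hb : Injective b) (htail : ∀ k, M ≤ k → b k = Pi.single 0 (k : ℂ)) :
    ∃ T, IsAutomorphism T ∧ ∀ j, T (b j) = Pi.single 0 (j : ℂ) := by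
  induction M generalizing b with
  | zero => exact ⟨id, IsAutomorphism.id, fun j => htail j j.zero_le⟩
  | succ M ih =>
    have hbM : ∀ k : ℕ, M < k → b M ≠ Pi.single 0 (k : ℂ) := fun k hk hMk =>
      hk.ne (hb (hMk.trans (htail k hk).symm))
    obtain ⟨T, hT, hTtail, hTb⟩ := exists_fixesTail_apply_eq_single hbM
    have htail' : ∀ k, M ≤ k → T (b k) = Pi.single 0 (k : ℂ) := by
      intro k hk
      rcases hk.eq_or_lt with rfl | hk
      · exact hTb
      · rw [htail k hk, hTtail k hk]
    obtain ⟨S, hS, hSb⟩ := ih (hT.injective.comp hb) htail'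
    exact ⟨S ∘ T, hS.comp hT, hSb⟩

end Plane

lemma DiscreteSeq.of_finite_ne {N : ℕ} {a a' : ℕ → Fin N → ℂ} (ha : DiscreteSeq a)
    (ha' : Injective a') (hfin : {j | a' j ≠ a j}.Finite) : DiscreteSeq a' := by
  refine ⟨ha', fun K hK => ((ha.2 K hK).union hfin).subset fun j hj => ?_⟩
  by_cases h : a' j = a j
  · exact Or.inl (show a j ∈ K from h ▸ hj)
  · exact Or.inr h

lemma Tame.of_finite_ne {n : ℕ} {a a' : ℕ → Fin (n + 2) → ℂ} (ha : Tame a)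
    (ha' : Injective a') (hfin : {j | a' j ≠ a j}.Finite) : Tame a' := by
  have hsingle : ∀ ζ : ℂ, (fun i : Fin (n + 2) => if (i : ℕ) = 0 then ζ else 0) = Pi.single 0 ζ :=
    fun ζ => funext fun i => by simp only [Pi.single_apply, Fin.val_eq_zero_iff]
  obtain ⟨Φ, hΦ, hΦa⟩ := ha
  obtain ⟨M, hM⟩ := hfin.bddAbove
  have htail : ∀ k, M + 1 ≤ k → Φ (a' k) = Pi.single 0 (k : ℂ) := by
    intro k hk
    have hak : a' k = a k := by_contra fun hne => absurd (hM hne) (by omega)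
    rw [hak, hΦa k, hsingle]
  obtain ⟨T, hT, hTa'⟩ :=
    exists_isAutomorphism_apply_eq_single (M + 1) (hΦ.injective.comp ha') htail
  exact ⟨T ∘ Φ, hT.comp hΦ, fun j => (hTa' j).trans (hsingle j).symm⟩

/-- A modification of a tame discrete sequence in finitely many terms is again
a tame discrete sequence. -/
theorem stmt_9 {N : ℕ} (hN : 1 < N)
    (a : ℕ → (Fin N → ℂ)) (ha : DiscreteSeq a) (haTame : Tame a)
    (a' : ℕ → (Fin N → ℂ)) (ha'inj : Function.Injective a')
    (hfin : {j : ℕ | a' j ≠ a j}.Finite) :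
    DiscreteSeq a' ∧ Tame a' := by
  obtain ⟨n, rfl⟩ : ∃ n, N = n + 2 := ⟨N - 2, by omega⟩
  exact ⟨ha.of_finite_ne ha'inj hfin, haTame.of_finite_ne ha'inj hfin⟩
end
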